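/- arXiv:2403.02190 — 2 statements merged into one kernel-verified Lean document; each statement's English description precedes it below -/
import Mathlib

section
/- Let L ∈ ℝ^{n×n} be symmetric positive definite, let c ∈ ℝ^n, F ∈ ℝ^{m×n}, l, ū ∈ ℝ^m, δU ≥ 0, and define the affine controller κ(x) = K(x − c) + l with K = F L⁻¹. Then κ maps the ellipsoid E(c, L⁻²) into the Euclidean closed ball of radius √δU centered at ū if and only if there exists φ ≥ 0 such that the block matrix [[φ·I_n, 0, Fᵀ],[0, δU − φ, (l − ū)ᵀ],[F, l − ū, I_m]] is positive semidefinite. -/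
open Matrix

noncomputable section

/-- Euclidean norm on `Fin k → ℝ`. -/
def eunorm {k : ℕ} (v : Fin k → ℝ) : ℝ := Real.sqrt (∑ i, v i ^ 2)

/-- Ellipsoid `E(c, P) = {x : (x−c)ᵀ P (x−c) ≤ 1}`. -/
def Ellip {n : ℕ} (c : Fin n → ℝ) (P : Matrix (Fin n) (Fin n) ℝ) : Set (Fin n → ℝ) :=
  {x | (x - c) ⬝ᵥ P.mulVec (x - c) ≤ 1}

/-- A vector as a single-row matrix. -/
def rowV {m : ℕ} (v : Fin m → ℝ) : Matrix (Fin 1) (Fin m) ℝ := Matrix.of fun _ j => v j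

/-- A vector as a single-column matrix. -/
def colV {m : ℕ} (v : Fin m → ℝ) : Matrix (Fin m) (Fin 1) ℝ := Matrix.of fun i _ => v i

/-- A scalar as a 1×1 matrix. -/
def sc (a : ℝ) : Matrix (Fin 1) (Fin 1) ℝ := Matrix.of fun _ _ => a

/-- 3×3 block matrix. -/
def block3 {n1 n2 n3 : Type*}
    (A11 : Matrix n1 n1 ℝ) (A12 : Matrix n1 n2 ℝ) (A13 : Matrix n1 n3 ℝ)
    (A21 : Matrix n2 n1 ℝ) (A22 : Matrix n2 n2 ℝ) (A23 : Matrix n2 n3 ℝ)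
    (A31 : Matrix n3 n1 ℝ) (A32 : Matrix n3 n2 ℝ) (A33 : Matrix n3 n3 ℝ) :
    Matrix ((n1 ⊕ n2) ⊕ n3) ((n1 ⊕ n2) ⊕ n3) ℝ :=
  fromBlocks (fromBlocks A11 A12 A21 A22) (fromRows A13 A23) (fromCols A31 A32) A33

/-!
Substituting `x = L y + c` turns `E(c, L⁻²)` into the unit ball, so with `d = l - ū` the
left-hand side says `‖F y + d‖² ≤ δU` whenever `‖y‖ ≤ 1`. Taking the Schur complement of the
identity block, the block matrix is positive semidefinite iff
`‖F y + t d‖² ≤ φ ‖y‖² + (δU - φ) t²` for all `y` and `t`. What remains is the S-lemma for the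
unit ball, which follows from the optimality conditions of the trust-region problem: a maximiser
`y₀` of `‖F y + d‖²` on the unit sphere satisfies `Fᵀ (F y₀ + d) = φ y₀` and `FᵀF ⪯ φ I` for
`φ = ⟪F y₀, F y₀ + d⟫ ≥ 0`, and then expanding `F y + t d = F (y - t y₀) + t (F y₀ + d)` gives
the inequality.
-/

lemma nonneg_at_zero_of_forall_pos {f : ℝ → ℝ} (hf : Continuous f) (h : ∀ s > 0, 0 ≤ f s) :
    0 ≤ f 0 :=
  ge_of_tendsto (hf.continuousWithinAt (s := Set.Ioi 0) (x := 0))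
    (eventually_nhdsWithin_of_forall h)

section

variable {ι κ : Type*} [Fintype ι] [Fintype κ]

lemma isCompact_setOf_dotProduct_self_eq_one : IsCompact {y : ι → ℝ | y ⬝ᵥ y = 1} := by
  have : {y : ι → ℝ | y ⬝ᵥ y = 1} =
      (PiLp.homeomorph 2 fun _ : ι => ℝ).symm ⁻¹' Metric.sphere 0 1 := by
    ext y
    rw [Set.mem_preimage, mem_sphere_zero_iff_norm, ← sq_eq_sq₀ (norm_nonneg _) zero_le_one,
      one_pow, ← real_inner_self_eq_norm_sq]
    exact Iff.rfl
  rw [this, Homeomorph.isCompact_preimage]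
  exact isCompact_sphere 0 1

lemma dotProduct_add_smul_self (u v : ι → ℝ) (s : ℝ) :
    (u + s • v) ⬝ᵥ (u + s • v) = u ⬝ᵥ u + 2 * s * (u ⬝ᵥ v) + s ^ 2 * (v ⬝ᵥ v) := by
  simp only [dotProduct_add, add_dotProduct, dotProduct_smul, smul_dotProduct, smul_eq_mul,
    dotProduct_comm v u]
  ring

variable (F : Matrix κ ι ℝ) (d : κ → ℝ) {y₀ : ι → ℝ}

/-- This is `f (y₀ + s • z) ≤ f y₀` multiplied by `‖z‖⁴ / 4`, where `s = -2 ⟪y₀, z⟫ / ‖z‖²` is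
chosen so that `y₀ + s • z` lies on the sphere. -/
lemma sq_dotProduct_mul_le_of_isMaxOn_unitSphere (hy₀ : y₀ ⬝ᵥ y₀ = 1)
    (hmax : IsMaxOn (fun y => (F *ᵥ y + d) ⬝ᵥ (F *ᵥ y + d)) {y | y ⬝ᵥ y = 1} y₀) (z : ι → ℝ) :
    (y₀ ⬝ᵥ z) ^ 2 * ((F *ᵥ z) ⬝ᵥ (F *ᵥ z)) ≤
      (y₀ ⬝ᵥ z) * ((F *ᵥ y₀ + d) ⬝ᵥ F *ᵥ z) * (z ⬝ᵥ z) := by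
  set a := y₀ ⬝ᵥ z
  set ℓ := (F *ᵥ y₀ + d) ⬝ᵥ F *ᵥ z
  set Q := (F *ᵥ z) ⬝ᵥ (F *ᵥ z)
  rcases eq_or_ne a 0 with ha | ha
  · simp [ha]
  have hz : z ⬝ᵥ z ≠ 0 := fun hz => ha (by simp [a, dotProduct_self_eq_zero.mp hz])
  set s := -2 * a / (z ⬝ᵥ z)
  have hs : s * (z ⬝ᵥ z) = -2 * a := div_mul_cancel₀ _ hz
  have hmem : y₀ + s • z ∈ {y | y ⬝ᵥ y = 1} := by
    show (y₀ + s • z) ⬝ᵥ (y₀ + s • z) = 1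
    rw [dotProduct_add_smul_self, hy₀]
    linear_combination s * hs
  have hle : 2 * s * ℓ + s ^ 2 * Q ≤ 0 := by
    have := hmax hmem
    simp only [Set.mem_ofPred_eq, mulVec_add, mulVec_smul, add_right_comm _ _ d,
      dotProduct_add_smul_self] at this
    linarith
  have key : (z ⬝ᵥ z) ^ 2 * (2 * s * ℓ + s ^ 2 * Q) = 4 * (a ^ 2 * Q - a * ℓ * (z ⬝ᵥ z)) := by
    linear_combination (2 * ℓ * (z ⬝ᵥ z) + Q * (s * (z ⬝ᵥ z) - 2 * a)) * hs
  nlinarith [mul_nonpos_of_nonneg_of_nonpos (sq_nonneg (z ⬝ᵥ z)) hle]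

lemma dotProduct_mulVec_eq_of_isMaxOn_unitSphere (hy₀ : y₀ ⬝ᵥ y₀ = 1)
    (hmax : IsMaxOn (fun y => (F *ᵥ y + d) ⬝ᵥ (F *ᵥ y + d)) {y | y ⬝ᵥ y = 1} y₀) (z : ι → ℝ) :
    (F *ᵥ y₀ + d) ⬝ᵥ F *ᵥ z = (F *ᵥ y₀) ⬝ᵥ (F *ᵥ y₀ + d) * (y₀ ⬝ᵥ z) := by
  set p := F *ᵥ y₀ + d
  set φ := (F *ᵥ y₀) ⬝ᵥ p
  set h := Fᵀ *ᵥ p - φ • y₀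
  have hh (z : ι → ℝ) : h ⬝ᵥ z = p ⬝ᵥ F *ᵥ z - φ * (y₀ ⬝ᵥ z) := by
    rw [sub_dotProduct, smul_dotProduct, smul_eq_mul, mulVec_transpose, ← dotProduct_mulVec]
  have hy₀h : y₀ ⬝ᵥ h = 0 := by
    rw [dotProduct_comm, hh, hy₀, dotProduct_comm]; ring
  -- `h` is the component of the gradient `Fᵀ p` orthogonal to `y₀`; testing the reflection
  -- inequality in the direction `h - ε • y₀` and letting `ε → 0⁺` gives `‖h‖⁴ ≤ 0`.
  suffices h = 0 by linarith [hh z, show h ⬝ᵥ z = 0 by rw [this, zero_dotProduct]]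
  have hlim : 0 ≤ -(h ⬝ᵥ h) ^ 2 := by
    let z (ε : ℝ) := h + (-ε) • y₀
    have := nonneg_at_zero_of_forall_pos
      (f := fun ε => -(ε * ((F *ᵥ z ε) ⬝ᵥ (F *ᵥ z ε))) - (h ⬝ᵥ h - ε * φ) * (h ⬝ᵥ h + ε ^ 2))
      (by fun_prop) fun ε hε => by
        have ha : y₀ ⬝ᵥ z ε = -ε := by simp [z, dotProduct_add, hy₀h, hy₀]
        have hℓ : p ⬝ᵥ F *ᵥ z ε = h ⬝ᵥ h - ε * φ := by
          have hhz : h ⬝ᵥ z ε = h ⬝ᵥ h := by simp [z, dotProduct_add, dotProduct_comm h y₀, hy₀h]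
          rw [← hhz, hh, ha]; ring
        have hzz : z ε ⬝ᵥ z ε = h ⬝ᵥ h + ε ^ 2 := by
          simp only [z, dotProduct_add_smul_self, hy₀, dotProduct_comm h y₀, hy₀h]; ring
        have hrefl := sq_dotProduct_mul_le_of_isMaxOn_unitSphere F d hy₀ hmax (z ε)
        rw [ha, hℓ, hzz] at hrefl
        refine nonneg_of_mul_nonneg_right ?_ hε
        linear_combination hrefl
    simpa [z, sq] using this
  have : h ⬝ᵥ h = 0 := by nlinarith [sq_nonneg (h ⬝ᵥ h)]
  exact dotProduct_self_eq_zero.mp this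

lemma dotProduct_mulVec_le_of_isMaxOn_unitSphere (hy₀ : y₀ ⬝ᵥ y₀ = 1)
    (hmax : IsMaxOn (fun y => (F *ᵥ y + d) ⬝ᵥ (F *ᵥ y + d)) {y | y ⬝ᵥ y = 1} y₀) (z : ι → ℝ) :
    (F *ᵥ z) ⬝ᵥ (F *ᵥ z) ≤ (F *ᵥ y₀) ⬝ᵥ (F *ᵥ y₀ + d) * (z ⬝ᵥ z) := by
  set φ := (F *ᵥ y₀) ⬝ᵥ (F *ᵥ y₀ + d)
  have hne (z : ι → ℝ) (hz : y₀ ⬝ᵥ z ≠ 0) : (F *ᵥ z) ⬝ᵥ (F *ᵥ z) ≤ φ * (z ⬝ᵥ z) := by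
    have hrefl := sq_dotProduct_mul_le_of_isMaxOn_unitSphere F d hy₀ hmax z
    rw [dotProduct_mulVec_eq_of_isMaxOn_unitSphere F d hy₀ hmax] at hrefl
    exact le_of_mul_le_mul_left (by linear_combination hrefl) (sq_pos_of_ne_zero hz)
  rcases ne_or_eq (y₀ ⬝ᵥ z) 0 with hz | hz
  · exact hne z hz
  have := nonneg_at_zero_of_forall_pos
    (f := fun ε =>
      φ * ((z + ε • y₀) ⬝ᵥ (z + ε • y₀)) - (F *ᵥ (z + ε • y₀)) ⬝ᵥ (F *ᵥ (z + ε • y₀)))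
    (by fun_prop) fun ε hε => sub_nonneg.mpr <| hne _ <| by
      simp [dotProduct_add, hz, hy₀, hε.ne']
  simpa using this

lemma dotProduct_add_smul_le_of_optimality {φ δU : ℝ} (hy₀ : y₀ ⬝ᵥ y₀ = 1)
    (hfirst : ∀ z, (F *ᵥ y₀ + d) ⬝ᵥ F *ᵥ z = φ * (y₀ ⬝ᵥ z))
    (hsecond : ∀ z, (F *ᵥ z) ⬝ᵥ (F *ᵥ z) ≤ φ * (z ⬝ᵥ z))
    (hδU : (F *ᵥ y₀ + d) ⬝ᵥ (F *ᵥ y₀ + d) ≤ δU) (y : ι → ℝ) (t : ℝ) :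
    (F *ᵥ y + t • d) ⬝ᵥ (F *ᵥ y + t • d) ≤ φ * (y ⬝ᵥ y) + (δU - φ) * t ^ 2 := by
  set w := y - t • y₀
  have hFy : F *ᵥ y + t • d = F *ᵥ w + t • (F *ᵥ y₀ + d) := by
    simp only [w, mulVec_sub, mulVec_smul, smul_add]; abel
  have hy : y = w + t • y₀ := by simp [w]
  have hwy₀ : w ⬝ᵥ y₀ = y₀ ⬝ᵥ y - t := by
    simp [w, sub_dotProduct, dotProduct_comm y y₀, hy₀]
  rw [hFy, dotProduct_add_smul_self, dotProduct_comm (F *ᵥ w) (F *ᵥ y₀ + d), hfirst, hy,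
    dotProduct_add_smul_self, hy₀, dotProduct_comm y₀ w, hwy₀]
  nlinarith [hsecond w, mul_le_mul_of_nonneg_left hδU (sq_nonneg t)]

lemma exists_multiplier_of_forall_unitBall {δU : ℝ}
    (h : ∀ y : ι → ℝ, y ⬝ᵥ y ≤ 1 → (F *ᵥ y + d) ⬝ᵥ (F *ᵥ y + d) ≤ δU) :
    ∃ φ, 0 ≤ φ ∧ ∀ (y : ι → ℝ) (t : ℝ),
      (F *ᵥ y + t • d) ⬝ᵥ (F *ᵥ y + t • d) ≤ φ * (y ⬝ᵥ y) + (δU - φ) * t ^ 2 := by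
  cases isEmpty_or_nonempty ι with
  | inl _ =>
    refine ⟨0, le_rfl, fun y t => ?_⟩
    have hd : d ⬝ᵥ d ≤ δU := by simpa using h 0 (by simp)
    simp only [Subsingleton.elim y 0, mulVec_zero, zero_add, dotProduct_smul, smul_dotProduct,
      smul_eq_mul, dotProduct_zero, mul_zero, sub_zero]
    linear_combination mul_le_mul_of_nonneg_left hd (sq_nonneg t)
  | inr _ =>
    classical
    obtain ⟨y₀, hy₀, hmax⟩ := isCompact_setOf_dotProduct_self_eq_one.exists_isMaxOn
      ⟨Pi.single (Classical.arbitrary ι) 1, by simp⟩ (by fun_prop : Continuous fun y : ι → ℝ =>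
        (F *ᵥ y + d) ⬝ᵥ (F *ᵥ y + d)).continuousOn
    have hsecond := dotProduct_mulVec_le_of_isMaxOn_unitSphere F d hy₀ hmax
    refine ⟨_, ?_, dotProduct_add_smul_le_of_optimality F d hy₀
      (dotProduct_mulVec_eq_of_isMaxOn_unitSphere F d hy₀ hmax) hsecond (h y₀ hy₀.le)⟩
    exact (dotProduct_star_self_nonneg (F *ᵥ y₀)).trans
      ((hsecond y₀).trans_eq (by rw [hy₀, mul_one]))

lemma forall_unitBall_iff_exists_multiplier (δU : ℝ) :
    (∀ y : ι → ℝ, y ⬝ᵥ y ≤ 1 → (F *ᵥ y + d) ⬝ᵥ (F *ᵥ y + d) ≤ δU) ↔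
      ∃ φ, 0 ≤ φ ∧ ∀ (y : ι → ℝ) (t : ℝ),
        (F *ᵥ y + t • d) ⬝ᵥ (F *ᵥ y + t • d) ≤ φ * (y ⬝ᵥ y) + (δU - φ) * t ^ 2 := by
  refine ⟨exists_multiplier_of_forall_unitBall F d, fun ⟨φ, hφ, hq⟩ y hy => ?_⟩
  have := hq y 1
  rw [one_smul] at this
  nlinarith

end

lemma posSemidef_fromBlocks_one_iff {ι κ : Type*} [Fintype ι] [Fintype κ] [DecidableEq κ]
    {A : Matrix ι ι ℝ} (hA : A.IsHermitian) (B : Matrix ι κ ℝ) :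
    (fromBlocks A B Bᵀ 1).PosSemidef ↔ ∀ x, (Bᵀ *ᵥ x) ⬝ᵥ (Bᵀ *ᵥ x) ≤ x ⬝ᵥ (A *ᵥ x) := by
  let : Invertible (1 : Matrix κ κ ℝ) := invertibleOne
  have hS : (A - B * Bᴴ).IsHermitian := hA.sub (isHermitian_mul_conjTranspose_self B)
  rw [← conjTranspose_eq_transpose_of_trivial, PosDef.fromBlocks₂₂ A B PosDef.one, inv_one,
    Matrix.mul_one, posSemidef_iff_dotProduct_mulVec, and_iff_right hS,
    conjTranspose_eq_transpose_of_trivial]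
  refine forall_congr' fun x => ?_
  rw [star_trivial, sub_mulVec, dotProduct_sub, sub_nonneg, ← mulVec_mulVec, dotProduct_mulVec x B,
    ← mulVec_transpose]

lemma block3_posSemidef_iff {ι : Type*} [Fintype ι] [DecidableEq ι] {m : ℕ}
    (F : Matrix (Fin m) ι ℝ) (d : Fin m → ℝ) (δU φ : ℝ) :
    (block3 (φ • (1 : Matrix ι ι ℝ)) 0 Fᵀ 0 (sc (δU - φ)) (rowV d) F (colV d) 1).PosSemidef ↔
      ∀ (y : ι → ℝ) (t : ℝ),
        (F *ᵥ y + t • d) ⬝ᵥ (F *ᵥ y + t • d) ≤ φ * (y ⬝ᵥ y) + (δU - φ) * t ^ 2 := by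
  have hA : (fromBlocks (φ • (1 : Matrix ι ι ℝ)) 0 0 (sc (δU - φ))).IsHermitian :=
    IsHermitian.fromBlocks (isHermitian_one.smul (.all φ)) (by simp) (by ext; simp [sc])
  have hB : (fromRows Fᵀ (rowV d))ᵀ = fromCols F (colV d) := by
    rw [transpose_fromRows, transpose_transpose]; rfl
  have hcol (y : ι → ℝ) (t : ℝ) :
      fromCols F (colV d) *ᵥ Sum.elim y (fun _ => t) = F *ᵥ y + t • d := by
    rw [fromCols_mulVec_sumElim]; congr 1; ext i; simp [colV, mulVec, dotProduct, mul_comm]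
  have hdiag (y : ι → ℝ) (t : ℝ) : Sum.elim y (fun _ => t) ⬝ᵥ
      (fromBlocks (φ • (1 : Matrix ι ι ℝ)) 0 0 (sc (δU - φ)) *ᵥ Sum.elim y (fun _ => t)) =
      φ * (y ⬝ᵥ y) + (δU - φ) * t ^ 2 := by
    rw [fromBlocks_mulVec]
    simp only [Sum.elim_comp_inl, Sum.elim_comp_inr, zero_mulVec, add_zero, zero_add, smul_mulVec,
      one_mulVec, sumElim_dotProduct_sumElim, dotProduct_smul, smul_eq_mul]
    simp [sc, dotProduct, mulVec]
    ring
  rw [block3, ← hB, posSemidef_fromBlocks_one_iff hA, hB]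
  constructor
  · intro h y t
    simpa only [hcol, hdiag] using h (Sum.elim y fun _ => t)
  · intro h x
    have hx : x = Sum.elim (x ∘ Sum.inl) (fun _ => x (Sum.inr 0)) := by
      ext (i | i)
      · rfl
      · rw [Fin.fin_one_eq_zero i]; rfl
    rw [hx, hcol, hdiag]
    exact h _ _

lemma eunorm_le_sqrt_iff {k : ℕ} (v : Fin k → ℝ) {δ : ℝ} (hδ : 0 ≤ δ) :
    eunorm v ≤ √δ ↔ v ⬝ᵥ v ≤ δ := by
  rw [eunorm, Real.sqrt_le_sqrt_iff hδ, dotProduct]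
  simp only [sq]

lemma forall_mem_ellip_sq_inv_iff {n : ℕ} {L : Matrix (Fin n) (Fin n) ℝ} (hL : L.IsSymm)
    (hdet : IsUnit L.det) (c : Fin n → ℝ) (P : (Fin n → ℝ) → Prop) :
    (∀ x ∈ Ellip c (L ^ 2)⁻¹, P (L⁻¹ *ᵥ (x - c))) ↔ ∀ y, y ⬝ᵥ y ≤ 1 → P y := by
  have hmem (x : Fin n → ℝ) :
      x ∈ Ellip c (L ^ 2)⁻¹ ↔ (L⁻¹ *ᵥ (x - c)) ⬝ᵥ (L⁻¹ *ᵥ (x - c)) ≤ 1 := by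
    rw [Ellip, Set.mem_ofPred_eq, sq, Matrix.mul_inv_rev, ← mulVec_mulVec, dotProduct_mulVec,
      ← mulVec_transpose, transpose_nonsing_inv, hL.eq]
  refine ⟨fun H y hy => ?_, fun H x hx => H _ ((hmem x).mp hx)⟩
  have hy' : L⁻¹ *ᵥ (L *ᵥ y + c - c) = y := by
    rw [add_sub_cancel_right, mulVec_mulVec, nonsing_inv_mul L hdet, one_mulVec]
  simpa only [hy'] using H (L *ᵥ y + c) (by rwa [hmem, hy'])

/-- The affine controller `κ(x) = F L⁻¹ (x − c) + l` maps `E(c, L⁻²)` into the closed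
ball of radius `√δU` centered at `ū` iff there exists `φ ≥ 0` with
`[[φI, 0, Fᵀ],[0, δU − φ, (l − ū)ᵀ],[F, l − ū, I]] ⪰ 0`. -/
theorem controller_input_ball_iff {n m : ℕ}
    (L : Matrix (Fin n) (Fin n) ℝ) (hL : L.PosDef)
    (c : Fin n → ℝ) (F : Matrix (Fin m) (Fin n) ℝ) (l ubar : Fin m → ℝ)
    (δU : ℝ) (hδU : 0 ≤ δU)
    (κ : (Fin n → ℝ) → (Fin m → ℝ))
    (hκ : ∀ x, κ x = (F * L⁻¹).mulVec (x - c) + l) :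
    (∀ x ∈ Ellip c (L ^ 2)⁻¹, eunorm (κ x - ubar) ≤ Real.sqrt δU) ↔
      ∃ φ : ℝ, 0 ≤ φ ∧
        (block3 (φ • (1 : Matrix (Fin n) (Fin n) ℝ)) 0 Fᵀ
                0 (sc (δU - φ)) (rowV (l - ubar))
                F (colV (l - ubar)) (1 : Matrix (Fin m) (Fin m) ℝ)).PosSemidef := by
  set d := l - ubar
  have hκd (x : Fin n → ℝ) : κ x - ubar = F *ᵥ (L⁻¹ *ᵥ (x - c)) + d := by
    rw [hκ, mulVec_mulVec, add_sub_assoc]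
  calc (∀ x ∈ Ellip c (L ^ 2)⁻¹, eunorm (κ x - ubar) ≤ √δU)
      ↔ ∀ x ∈ Ellip c (L ^ 2)⁻¹,
          (F *ᵥ (L⁻¹ *ᵥ (x - c)) + d) ⬝ᵥ (F *ᵥ (L⁻¹ *ᵥ (x - c)) + d) ≤ δU := by
        simp only [hκd, eunorm_le_sqrt_iff _ hδU]
    _ ↔ ∀ y, y ⬝ᵥ y ≤ 1 → (F *ᵥ y + d) ⬝ᵥ (F *ᵥ y + d) ≤ δU :=
        forall_mem_ellip_sq_inv_iff (isHermitian_iff_isSymm.mp hL.isHermitian)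
          ((isUnit_iff_isUnit_det L).mp hL.isUnit) c (fun y => (F *ᵥ y + d) ⬝ᵥ (F *ᵥ y + d) ≤ δU)
    _ ↔ _ := forall_unitBall_iff_exists_multiplier F d δU
    _ ↔ _ := by simp only [block3_posSemidef_iff]
end
end

section
/- Consider the discrete-time system x⁺ = f(x,u,w) with f : ℝ^n × ℝ^m × ℝ^d → ℝ^n, input set 𝒰 = ∩_{k=1}^{N_u} {u : ‖U_k u‖ ≤ 1} (U_k ∈ ℝ^{p_k×m}), disturbance set 𝒲 = conv{w_1,…,w_{N_w}} ⊆ ℝ^d with 0 ∈ 𝒲. Let c, c₊ ∈ ℝ^n, let P₊ be symmetric positive definite, let ū ∈ 𝒰, and let A ∈ ℝ^{n×n}, B ∈ ℝ^{n×m}, E ∈ ℝ^{n×d}, g ∈ ℝ^n be such that, for a componentwise nonnegative vector 𝐋 ∈ ℝ^n and all (x,u,w) and each component i: |f_i(x,u,w) − (Ax + Bu + Ew + g)_i| ≤ (1/2)𝐋_i(‖x − c‖² + ‖u − ū‖² + ‖w‖²). Suppose there exist a symmetric positive definite L ∈ ℝ^{n×n}, F ∈ ℝ^{m×n}, l ∈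 ℝ^m, and scalars δX, δU, φ, β_{ij}, τ_k ≥ 0 such that, with μ = g + Ac + Bl − c₊, δW = max_j ‖w_j‖², r² = δX + δU + δW, and V_1,…,V_{2^n} the vertices of the hyperrectangle H(0, (1/2)𝐋 r²), the following matrices are positive semidefinite: (16) [[I_n, L],[L, δX·I_n]]; (17) [[φ I_n, 0, Fᵀ],[0, δU − φ, (l − ū)ᵀ],[F, l − ū, I_m]]; (18) for all i ∈ {1,…,2^n}, j ∈ {1,…,N_w}: [[β_{ij} I_n, 0, (AL + BF)ᵀ],[0, 1 − β_{ij}, (μ + V_i + E w_j)ᵀ],[AL + BF, μ + V_i + E w_j, P₊⁻¹]]; (19) for all k ∈ {1,…,N_u}: [[τ_k I_n, 0, Fᵀ U_kᵀ],[0, 1 − τ_k, lᵀ U_kᵀ],[U_k F, U_k l, I_{p_k}]]. Then, setting P = L⁻², K = F L⁻¹, and κ(x) = K(x − c) + l, one has: for all x ∈ E(c, P) and all w ∈ 𝒲, f(x, κ(x), w) ∈ E(c₊, P₊), and moreover κ(x) ∈ 𝒰 for all x ∈ E(c, P). -/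
open Matrix Set
open scoped Pointwise

noncomputable section

/-!
Write `x = c + L z` with `zᵀz ≤ 1`. Each LMI is, by a Schur complement, a quadratic inequality in
`(z, 1)`, and on the unit ball the multipliers `φ`, `β`, `τ` drop out (S-procedure): (16) gives
`‖x - c‖² ≤ δX`, (17) gives `‖κ x - ū‖² ≤ δU`, (19) gives `‖U_k κ x‖ ≤ 1`. With `‖w‖² ≤ δW` on
`𝒲`, the linearization error then lies in the box `H(0, ½ 𝐋 r²)`, i.e. in the convex hull of the
`V_i`. So `f(x, κ x, w) - c₊ = (AL + BF) z + μ + e + E w` is a convex combination of the points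
`(AL + BF) z + μ + V_i + E w_j`, each of which lies in `E(0, P₊)` by (18), and the ellipsoid is
convex.
-/

section

variable {ι κ : Type*}

lemma eunorm_sq {k : ℕ} (v : Fin k → ℝ) : eunorm v ^ 2 = v ⬝ᵥ v := by
  rw [eunorm, Real.sq_sqrt (by positivity)]
  simp only [dotProduct, sq]

lemma eunorm_le_one_iff {k : ℕ} (v : Fin k → ℝ) : eunorm v ≤ 1 ↔ v ⬝ᵥ v ≤ 1 := by
  rw [eunorm, Real.sqrt_le_one]
  simp only [dotProduct, sq]

theorem Matrix.PosSemidef.convexOn_dotProduct_mulVec [Fintype ι] {P : Matrix ι ι ℝ}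
    (hP : P.PosSemidef) : ConvexOn ℝ univ fun y : ι → ℝ => y ⬝ᵥ P *ᵥ y := by
  refine ⟨convex_univ, fun x _ y _ a b ha hb hab => ?_⟩
  have hPt : Pᵀ = P := hP.1
  have hsymm : y ⬝ᵥ P *ᵥ x = x ⬝ᵥ P *ᵥ y := by
    rw [dotProduct_comm, dotProduct_mulVec, ← mulVec_transpose, hPt]
  have hxy := hP.dotProduct_mulVec_nonneg (x - y)
  simp only [star_trivial, mulVec_add, mulVec_sub, mulVec_smul, dotProduct_add, add_dotProduct,
    dotProduct_sub, sub_dotProduct, dotProduct_smul, smul_dotProduct, smul_eq_mul] at hxy ⊢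
  obtain rfl : b = 1 - a := by linarith
  nlinarith [mul_nonneg (mul_nonneg ha hb) hxy]

lemma convex_Ellip {n : ℕ} {P : Matrix (Fin n) (Fin n) ℝ} (hP : P.PosSemidef) (c : Fin n → ℝ) :
    Convex ℝ (Ellip c P) := by
  have h := (hP.convexOn_dotProduct_mulVec.translate_right (-c)).convex_le 1
  simp only [preimage_univ, mem_univ, true_and, Function.comp_def, neg_add_eq_sub] at h
  exact h

lemma eunorm_sq_le_of_mem_convexHull {k : ℕ} {s : Set (Fin k → ℝ)} {δ : ℝ}
    (hs : ∀ w ∈ s, eunorm w ^ 2 ≤ δ) {w : Fin k → ℝ} (hw : w ∈ convexHull ℝ s) :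
    eunorm w ^ 2 ≤ δ := by
  have hconv := (PosSemidef.one (n := Fin k) (R := ℝ)).convexOn_dotProduct_mulVec.convex_le δ
  simp only [one_mulVec, mem_univ, true_and, ← eunorm_sq] at hconv
  exact convexHull_min hs hconv hw

lemma mem_convexHull_boxVertices [Finite ι] {h e : ι → ℝ} {V : (ι → Bool) → ι → ℝ}
    (hV : ∀ σ i, V σ i = (if σ i then 1 else -1) * h i) (he : ∀ i, |e i| ≤ h i) :
    e ∈ convexHull ℝ (range V) := by
  have hpi : e ∈ convexHull ℝ (univ.pi fun i => ({-h i, h i} : Set ℝ)) := by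
    refine mem_convexHull_pi fun i _ => ?_
    rw [convexHull_pair, segment_eq_Icc (neg_le_self ((abs_nonneg _).trans (he i)))]
    exact abs_le.1 (he i)
  refine convexHull_mono (fun s hs => ?_) hpi
  refine ⟨fun i => decide (s i = h i), funext fun i => ?_⟩
  rw [hV]
  by_cases hh : s i = h i
  · simp [hh]
  · rw [if_neg (by simpa using hh), (hs i (mem_univ i)).resolve_right hh]
    ring

lemma add_add_mulVec_mem_of_mem_convexHull [Fintype κ] {K : Set (ι → ℝ)} (hK : Convex ℝ K)
    (a : ι → ℝ) (E : Matrix ι κ ℝ) {s : Set (ι → ℝ)} {t : Set (κ → ℝ)}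
    (hst : ∀ v ∈ s, ∀ w ∈ t, a + v + E *ᵥ w ∈ K) {v : ι → ℝ} {w : κ → ℝ}
    (hv : v ∈ convexHull ℝ s) (hw : w ∈ convexHull ℝ t) : a + v + E *ᵥ w ∈ K := by
  have hsum : a + v + E *ᵥ w ∈ convexHull ℝ ({a} + s + E.mulVecLin '' t) := by
    rw [convexHull_add, convexHull_add, convexHull_singleton, ← LinearMap.image_convexHull]
    exact add_mem_add (add_mem_add rfl hv) ⟨w, hw, rfl⟩
  refine convexHull_min ?_ hK hsum
  rintro _ ⟨_, ⟨_, rfl, v, hv, rfl⟩, _, ⟨w, hw, rfl⟩, rfl⟩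
  exact hst v hv w hw

lemma Ellip_sq_inv_eq_image {n : ℕ} {L : Matrix (Fin n) (Fin n) ℝ} (hL : L.IsSymm)
    (hdet : IsUnit L.det) (c : Fin n → ℝ) :
    Ellip c (L ^ 2)⁻¹ = (c + L *ᵥ ·) '' {z | z ⬝ᵥ z ≤ 1} := by
  have hform : ∀ y, y ⬝ᵥ (L ^ 2)⁻¹ *ᵥ y = L⁻¹ *ᵥ y ⬝ᵥ L⁻¹ *ᵥ y := fun y => by
    rw [sq, Matrix.mul_inv_rev, ← mulVec_mulVec, dotProduct_mulVec, ← mulVec_transpose,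
      transpose_nonsing_inv, hL.eq, dotProduct_comm]
  ext x
  simp only [Ellip, mem_ofPred_eq, mem_image, hform]
  constructor
  · intro hx
    refine ⟨L⁻¹ *ᵥ (x - c), hx, ?_⟩
    rw [mulVec_mulVec, mul_nonsing_inv _ hdet, one_mulVec, add_sub_cancel]
  · rintro ⟨z, hz, rfl⟩
    rwa [add_sub_cancel_left, mulVec_mulVec, nonsing_inv_mul _ hdet, one_mulVec]

lemma dotProduct_mulVec_self_le_of_fromBlocks_posSemidef [Fintype ι] [Fintype κ] [DecidableEq ι]
    [DecidableEq κ] {B : Matrix ι κ ℝ} {δ : ℝ} (h : (fromBlocks 1 B Bᵀ (δ • 1)).PosSemidef)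
    (hδ : 0 ≤ δ) {z : κ → ℝ} (hz : z ⬝ᵥ z ≤ 1) : B *ᵥ z ⬝ᵥ B *ᵥ z ≤ δ := by
  have : Invertible (1 : Matrix ι ι ℝ) := invertibleOne
  rw [← conjTranspose_eq_transpose_of_trivial, PosDef.fromBlocks₁₁ B _ PosDef.one] at h
  have hz' := h.dotProduct_mulVec_nonneg z
  rw [inv_one, Matrix.mul_one, conjTranspose_eq_transpose_of_trivial, star_trivial, sub_mulVec,
    dotProduct_sub, smul_mulVec, one_mulVec, dotProduct_smul, smul_eq_mul, ← mulVec_mulVec,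
    dotProduct_mulVec z Bᵀ, vecMul_transpose] at hz'
  linarith [mul_le_of_le_one_right hδ hz]

lemma dotProduct_mulVec_le_of_block3_posSemidef [Fintype ι] [DecidableEq ι] {k : ℕ} {α b : ℝ}
    {C : Matrix (Fin k) ι ℝ} {v : Fin k → ℝ} {R : Matrix (Fin k) (Fin k) ℝ} (hR : R.PosDef)
    (h : (block3 (α • 1) 0 Cᵀ 0 (sc b) (rowV v) C (colV v) R).PosSemidef)
    (hα : 0 ≤ α) {z : ι → ℝ} (hz : z ⬝ᵥ z ≤ 1) :
    (C *ᵥ z + v) ⬝ᵥ R⁻¹ *ᵥ (C *ᵥ z + v) ≤ α + b := by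
  have : Invertible R := hR.isUnit.invertible
  set N := fromRows Cᵀ (rowV v)
  have hcols : fromCols C (colV v) = Nᴴ := by
    rw [conjTranspose_eq_transpose_of_trivial, transpose_fromRows, transpose_transpose]
    rfl
  rw [block3, hcols, PosDef.fromBlocks₂₂ _ _ hR] at h
  -- the Schur complement of `R`, evaluated at `(z, 1)`
  set y : ι ⊕ Fin 1 → ℝ := Sum.elim z fun _ => 1
  have hNy : Nᴴ *ᵥ y = C *ᵥ z + v := by
    rw [← hcols, fromCols_mulVec_sumElim]
    congr 1
    ext i
    simp [colV, mulVec, dotProduct]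
  have hMy : y ⬝ᵥ fromBlocks (α • 1) 0 0 (sc b) *ᵥ y = α * (z ⬝ᵥ z) + b := by
    simp only [y, fromBlocks_mulVec, sumElim_dotProduct_sumElim, smul_mulVec, one_mulVec,
      zero_mulVec, add_zero, zero_add, dotProduct_smul, smul_eq_mul]
    simp [sc, mulVec, dotProduct]
  have hy := h.dotProduct_mulVec_nonneg y
  rw [star_trivial, sub_mulVec, dotProduct_sub, hMy, ← mulVec_mulVec, ← mulVec_mulVec,
    dotProduct_mulVec y N, ← mulVec_transpose, ← conjTranspose_eq_transpose_of_trivial, hNy] at hy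
  linarith [mul_le_of_le_one_right hα hz]

end

theorem local_transition_feasibility_general {n m d Nw Nu : ℕ}
    (f : (Fin n → ℝ) → (Fin m → ℝ) → (Fin d → ℝ) → (Fin n → ℝ))
    (p : Fin Nu → ℕ) (Umat : (k : Fin Nu) → Matrix (Fin (p k)) (Fin m) ℝ)
    (wv : Fin Nw → (Fin d → ℝ))
    (c cp : Fin n → ℝ)
    (Pp : Matrix (Fin n) (Fin n) ℝ) (hPp : Pp.PosDef)
    (ubar : Fin m → ℝ)
    (A : Matrix (Fin n) (Fin n) ℝ) (B : Matrix (Fin n) (Fin m) ℝ)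
    (E : Matrix (Fin n) (Fin d) ℝ) (g : Fin n → ℝ)
    (Lv : Fin n → ℝ) (hLv : ∀ i, 0 ≤ Lv i)
    (hlin : ∀ x u w, ∀ i,
      |f x u w i - (A.mulVec x + B.mulVec u + E.mulVec w + g) i| ≤
        (1 / 2) * Lv i * (eunorm (x - c) ^ 2 + eunorm (u - ubar) ^ 2 + eunorm w ^ 2))
    (L : Matrix (Fin n) (Fin n) ℝ) (hL : L.PosDef)
    (F : Matrix (Fin m) (Fin n) ℝ) (l : Fin m → ℝ)
    (δX δU δW : ℝ) (hδX : 0 ≤ δX)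
    (hδW : IsGreatest (Set.range fun j => eunorm (wv j) ^ 2) δW)
    (φ : ℝ) (hφ : 0 ≤ φ)
    (β : (Fin n → Bool) → Fin Nw → ℝ) (hβ : ∀ σ j, 0 ≤ β σ j)
    (τ : Fin Nu → ℝ) (hτ : ∀ k, 0 ≤ τ k)
    (μ : Fin n → ℝ) (hμ : μ = g + A.mulVec c + B.mulVec l - cp)
    (r2 : ℝ) (hr2 : r2 = δX + δU + δW)
    (V : (Fin n → Bool) → (Fin n → ℝ))
    (hV : ∀ σ i, V σ i = (if σ i then 1 else -1) * ((1 / 2) * Lv i * r2))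
    (h16 : (fromBlocks (1 : Matrix (Fin n) (Fin n) ℝ) L L
      (δX • (1 : Matrix (Fin n) (Fin n) ℝ))).PosSemidef)
    (h17 : (block3 (φ • (1 : Matrix (Fin n) (Fin n) ℝ)) 0 Fᵀ
        0 (sc (δU - φ)) (rowV (l - ubar))
        F (colV (l - ubar)) (1 : Matrix (Fin m) (Fin m) ℝ)).PosSemidef)
    (h18 : ∀ (σ : Fin n → Bool) (j : Fin Nw),
      (block3 (β σ j • (1 : Matrix (Fin n) (Fin n) ℝ)) 0 (A * L + B * F)ᵀ
        0 (sc (1 - β σ j)) (rowV (μ + V σ + E.mulVec (wv j)))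
        (A * L + B * F) (colV (μ + V σ + E.mulVec (wv j))) Pp⁻¹).PosSemidef)
    (h19 : ∀ k : Fin Nu,
      (block3 (τ k • (1 : Matrix (Fin n) (Fin n) ℝ)) 0 (Umat k * F)ᵀ
        0 (sc (1 - τ k)) (rowV ((Umat k).mulVec l))
        (Umat k * F) (colV ((Umat k).mulVec l))
        (1 : Matrix (Fin (p k)) (Fin (p k)) ℝ)).PosSemidef)
    (κ : (Fin n → ℝ) → (Fin m → ℝ))
    (hκ : ∀ x, κ x = (F * L⁻¹).mulVec (x - c) + l) :
    ∀ x ∈ Ellip c (L ^ 2)⁻¹,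
      (∀ w ∈ convexHull ℝ (Set.range wv), f x (κ x) w ∈ Ellip cp Pp) ∧
        (∀ k, eunorm ((Umat k).mulVec (κ x)) ≤ 1) := by
  have hLsymm : L.IsSymm := isHermitian_iff_isSymm.1 hL.1
  have hLdet : IsUnit L.det := hL.det_pos.ne'.isUnit
  rw [Ellip_sq_inv_eq_image hLsymm hLdet]
  rintro _ ⟨z, hz, rfl⟩
  set x := c + L *ᵥ z
  have hκx : κ x = F *ᵥ z + l := by
    rw [hκ, add_sub_cancel_left, mulVec_mulVec, Matrix.mul_assoc, nonsing_inv_mul _ hLdet,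
      Matrix.mul_one]
  have hX : eunorm (x - c) ^ 2 ≤ δX := by
    rw [eunorm_sq, add_sub_cancel_left]
    exact dotProduct_mulVec_self_le_of_fromBlocks_posSemidef (by rwa [hLsymm.eq]) hδX hz
  have hU : eunorm (κ x - ubar) ^ 2 ≤ δU := by
    have := dotProduct_mulVec_le_of_block3_posSemidef PosDef.one h17 hφ hz
    rwa [inv_one, one_mulVec, add_sub_cancel, ← add_sub_assoc, ← hκx, ← eunorm_sq] at this
  refine ⟨fun w hw => ?_, fun k => ?_⟩
  · have hW : eunorm w ^ 2 ≤ δW :=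
      eunorm_sq_le_of_mem_convexHull (by rintro _ ⟨j, rfl⟩; exact hδW.2 ⟨j, rfl⟩) hw
    set e := f x (κ x) w - (A *ᵥ x + B *ᵥ κ x + E *ᵥ w + g)
    have he : e ∈ convexHull ℝ (range V) := mem_convexHull_boxVertices hV fun i =>
      (hlin _ _ _ i).trans (mul_le_mul_of_nonneg_left (by linarith) (by linarith [hLv i]))
    rw [show f x (κ x) w = (A *ᵥ x + B *ᵥ κ x + g) + e + E *ᵥ w by simp only [e]; abel]
    refine add_add_mulVec_mem_of_mem_convexHull (convex_Ellip hPp.posSemidef cp) _ E ?_ he hw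
    rintro _ ⟨σ, rfl⟩ _ ⟨j, rfl⟩
    have hvert : A *ᵥ x + B *ᵥ κ x + g + V σ + E *ᵥ wv j - cp =
        (A * L + B * F) *ᵥ z + (μ + V σ + E *ᵥ wv j) := by
      simp only [x, hμ, hκx, mulVec_add, add_mulVec, mulVec_mulVec]
      abel
    have := dotProduct_mulVec_le_of_block3_posSemidef hPp.inv (h18 σ j) (hβ σ j) hz
    rwa [nonsing_inv_nonsing_inv _ hPp.det_pos.ne'.isUnit, add_sub_cancel, ← hvert] at this
  · have := dotProduct_mulVec_le_of_block3_posSemidef PosDef.one (h19 k) (hτ k) hz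
    rw [inv_one, one_mulVec, add_sub_cancel] at this
    rwa [eunorm_le_one_iff, hκx, mulVec_add, mulVec_mulVec]

/-- **Theorem 2 (feasibility of the local transition controller via LMIs)**:
under the linearization-error bound around `(c, ū, 0)`, if the LMIs (16)–(19) are
feasible, then the affine controller `κ(x) = F L⁻¹ (x − c) + l` maps every
`x ∈ E(c, L⁻²)` into `E(c₊, P₊)` for every disturbance in `𝒲 = conv{w₁,…,w_{N_w}}`,
and its inputs belong to the input set `𝒰 = ∩ₖ {u : ‖Uₖ u‖ ≤ 1}`. -/
theorem local_transition_feasibility {n m d Nw Nu : ℕ}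
    (f : (Fin n → ℝ) → (Fin m → ℝ) → (Fin d → ℝ) → (Fin n → ℝ))
    (p : Fin Nu → ℕ) (Umat : (k : Fin Nu) → Matrix (Fin (p k)) (Fin m) ℝ)
    (wv : Fin Nw → (Fin d → ℝ))
    (hW0 : (0 : Fin d → ℝ) ∈ convexHull ℝ (Set.range wv))
    (c cp : Fin n → ℝ)
    (Pp : Matrix (Fin n) (Fin n) ℝ) (hPp : Pp.PosDef)
    (ubar : Fin m → ℝ) (hubar : ∀ k, eunorm ((Umat k).mulVec ubar) ≤ 1)
    (A : Matrix (Fin n) (Fin n) ℝ) (B : Matrix (Fin n) (Fin m) ℝ)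
    (E : Matrix (Fin n) (Fin d) ℝ) (g : Fin n → ℝ)
    (Lv : Fin n → ℝ) (hLv : ∀ i, 0 ≤ Lv i)
    (hlin : ∀ x u w, ∀ i,
      |f x u w i - (A.mulVec x + B.mulVec u + E.mulVec w + g) i| ≤
        (1 / 2) * Lv i * (eunorm (x - c) ^ 2 + eunorm (u - ubar) ^ 2 + eunorm w ^ 2))
    (L : Matrix (Fin n) (Fin n) ℝ) (hL : L.PosDef)
    (F : Matrix (Fin m) (Fin n) ℝ) (l : Fin m → ℝ)
    (δX δU δW : ℝ) (hδX : 0 ≤ δX) (hδU : 0 ≤ δU)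
    (hδW : IsGreatest (Set.range fun j => eunorm (wv j) ^ 2) δW)
    (φ : ℝ) (hφ : 0 ≤ φ)
    (β : (Fin n → Bool) → Fin Nw → ℝ) (hβ : ∀ σ j, 0 ≤ β σ j)
    (τ : Fin Nu → ℝ) (hτ : ∀ k, 0 ≤ τ k)
    (μ : Fin n → ℝ) (hμ : μ = g + A.mulVec c + B.mulVec l - cp)
    (r2 : ℝ) (hr2 : r2 = δX + δU + δW)
    (V : (Fin n → Bool) → (Fin n → ℝ))
    (hV : ∀ σ i, V σ i = (if σ i then 1 else -1) * ((1 / 2) * Lv i * r2))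
    (h16 : (fromBlocks (1 : Matrix (Fin n) (Fin n) ℝ) L L
      (δX • (1 : Matrix (Fin n) (Fin n) ℝ))).PosSemidef)
    (h17 : (block3 (φ • (1 : Matrix (Fin n) (Fin n) ℝ)) 0 Fᵀ
        0 (sc (δU - φ)) (rowV (l - ubar))
        F (colV (l - ubar)) (1 : Matrix (Fin m) (Fin m) ℝ)).PosSemidef)
    (h18 : ∀ (σ : Fin n → Bool) (j : Fin Nw),
      (block3 (β σ j • (1 : Matrix (Fin n) (Fin n) ℝ)) 0 (A * L + B * F)ᵀ
        0 (sc (1 - β σ j)) (rowV (μ + V σ + E.mulVec (wv j)))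
        (A * L + B * F) (colV (μ + V σ + E.mulVec (wv j))) Pp⁻¹).PosSemidef)
    (h19 : ∀ k : Fin Nu,
      (block3 (τ k • (1 : Matrix (Fin n) (Fin n) ℝ)) 0 (Umat k * F)ᵀ
        0 (sc (1 - τ k)) (rowV ((Umat k).mulVec l))
        (Umat k * F) (colV ((Umat k).mulVec l))
        (1 : Matrix (Fin (p k)) (Fin (p k)) ℝ)).PosSemidef)
    (κ : (Fin n → ℝ) → (Fin m → ℝ))
    (hκ : ∀ x, κ x = (F * L⁻¹).mulVec (x - c) + l) :
    ∀ x ∈ Ellip c (L ^ 2)⁻¹,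
      (∀ w ∈ convexHull ℝ (Set.range wv), f x (κ x) w ∈ Ellip cp Pp) ∧
        (∀ k, eunorm ((Umat k).mulVec (κ x)) ≤ 1) :=
  local_transition_feasibility_general f p Umat wv c cp Pp hPp ubar A B E g Lv hLv hlin L hL F l δX
    δU δW hδX hδW φ hφ β hβ τ hτ μ hμ r2 hr2 V hV h16 h17 h18 h19 κ hκ
end
end
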